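/- Suppose a walk X on ℤ with X_0 = 0 is transient to the right (X_n → +∞) and has infinitely many regeneration points 0 ≤ D_1 < D_2 < ⋯. If there exist constants a, b > 0 such that D_k/k → a and T(D_k)/k → b as k → ∞ (where T(z) is the first hitting time of z), then lim_{n→∞} X_n/n = a/b. -/

import Mathlib

open Filter Topology

/-- Number of visits of the walk `X` to site `x` up to and including time `n`. -/
def visits (X : ℕ → ℤ) (n : ℕ) (x : ℤ) : ℕ :=
  ((Finset.range (n + 1)).filter (fun m => X m = x)).card

/-- `E` is an arrow system: each arrow is `+1` or `-1`. -/
def IsArrow (E : ℤ → ℕ → ℤ) : Prop := ∀ x k, E x k = 1 ∨ E x k = -1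

/-- `X` is the walk defined by the arrow system `E`. -/
def IsWalk (E : ℤ → ℕ → ℤ) (X : ℕ → ℤ) : Prop :=
  X 0 = 0 ∧ ∀ n, X (n + 1) = X n + E (X n) (visits X n (X n))

/-- The partial-sum domination order `L ⪯ R` on arrow systems. -/
def Prec (L R : ℤ → ℕ → ℤ) : Prop :=
  ∀ x k, ∑ j ∈ Finset.Icc 1 k, L x j ≤ ∑ j ∈ Finset.Icc 1 k, R x j

/-- `T` is the first hitting time of `x` by the walk `X`. -/
def FirstHit (X : ℕ → ℤ) (x : ℤ) (T : ℕ) : Prop :=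
  X T = x ∧ ∀ m < T, X m ≠ x

/-- `x ≥ 0` is a regeneration point of the walk `X`. -/
def Regen (X : ℕ → ℤ) (x : ℤ) : Prop :=
  0 ≤ x ∧ ∃ T, FirstHit X x T ∧ ∀ n ≥ T, x ≤ X n

/-- a nearest-neighbour right-transient walk with regeneration points
D_1 < D_2 < ⋯ such that D_k/k → a > 0 and T(D_k)/k → b > 0 has speed a/b. -/
theorem stmt_15 (X : ℕ → ℤ) (hX0 : X 0 = 0) (hnn : ∀ n, |X (n + 1) - X n| = 1)
    (htrans : Tendsto X atTop atTop)
    (D : ℕ → ℤ) (hmono : StrictMono D) (hD1 : 0 ≤ D 1)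
    (hreg : ∀ k ≥ 1, Regen X (D k))
    (T : ℕ → ℕ) (hT : ∀ k ≥ 1, FirstHit X (D k) (T k))
    (a b : ℝ) (ha : 0 < a) (hb : 0 < b)
    (hDa : Tendsto (fun k => (D k : ℝ) / (k : ℝ)) atTop (nhds a))
    (hTb : Tendsto (fun k => (T k : ℝ) / (k : ℝ)) atTop (nhds b)) :
    Tendsto (fun n => (X n : ℝ) / (n : ℝ)) atTop (nhds (a / b)) := by
  -- steps are bounded by 1
  have hstep : ∀ n, X (n + 1) ≤ X n + 1 := by
    intro n
    have h := abs_le.mp (hnn n).le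
    omega
  -- the walk position is at most the time
  have hXle : ∀ m : ℕ, X m ≤ (m : ℤ) := by
    intro m
    induction m with
    | zero => simp [hX0]
    | succ m ih =>
      have := hstep m
      push_cast
      omega
  -- first hitting times are unique
  have hfhu : ∀ (x : ℤ) (T1 T2 : ℕ), FirstHit X x T1 → FirstHit X x T2 → T1 = T2 := by
    intro x T1 T2 h1 h2
    rcases lt_trichotomy T1 T2 with h | h | h
    · exact absurd h1.1 (h2.2 T1 h)
    · exact h
    · exact absurd h2.1 (h1.2 T2 h)
  -- before the first hit of a positive level, the walk stays strictly below it
  have hbelow : ∀ z : ℤ, 0 < z → ∀ m : ℕ, (∀ j ≤ m, X j ≠ z) → X m < z := by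
    intro z hz m
    induction m with
    | zero => intro _; rw [hX0]; exact hz
    | succ m ih =>
      intro hj
      have h1 : X m < z := ih fun j hjm => hj j (hjm.trans (Nat.le_succ m))
      have h2 : X (m + 1) ≠ z := hj (m + 1) le_rfl
      have := hstep m
      omega
  -- D k ≥ k - 1 for k ≥ 1
  have hDk : ∀ k : ℕ, 1 ≤ k → (k : ℤ) - 1 ≤ D k := by
    intro k hk
    induction k with
    | zero => omega
    | succ k ih =>
      show ((k + 1 : ℕ) : ℤ) - 1 ≤ D (k + 1)
      rcases Nat.eq_or_lt_of_le hk with h | h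
      · rw [← h] at *; push_cast; omega
      · have h1 : 1 ≤ k := by omega
        have h2 := ih h1
        have h3 : D k < D (k + 1) := hmono (by omega)
        push_cast
        omega
  -- T k ≥ D k
  have hTD : ∀ k : ℕ, 1 ≤ k → D k ≤ (T k : ℤ) := by
    intro k hk
    have h := (hT k hk).1
    rw [← h]
    exact hXle (T k)
  -- after time T k the walk stays at or above D k
  have hXge : ∀ k : ℕ, 1 ≤ k → ∀ n : ℕ, T k ≤ n → D k ≤ X n := by
    intro k hk n hn
    obtain ⟨-, T', hT', hT'2⟩ := hreg k hk
    have : T' = T k := hfhu (D k) T' (T k) hT' (hT k hk)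
    exact hT'2 n (by omega)
  -- the index of the last regeneration level hit by time n
  set K : ℕ → ℕ := fun n => Nat.findGreatest (fun k => T k ≤ n) (n + 2) with hKdef
  have hKle : ∀ n, K n ≤ n + 1 := by
    intro n
    simp only [hKdef]
    have h1 : Nat.findGreatest (fun k => T k ≤ n) (n + 2) ≤ n + 2 := Nat.findGreatest_le _
    rcases Nat.eq_or_lt_of_le h1 with h | h
    · exfalso
      have h2 : T (n + 2) ≤ n :=
        Nat.findGreatest_of_ne_zero (P := fun k => T k ≤ n) (m := n + 2) h (by omega)
      have h3 : ((n : ℤ) + 2) - 1 ≤ D (n + 2) := by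
        have := hDk (n + 2) (by omega); push_cast at this ⊢; omega
      have h4 := hTD (n + 2) (by omega)
      have : ((T (n+2) : ℕ) : ℤ) ≤ (n : ℤ) := by exact_mod_cast h2
      omega
    · omega
  have hKspec : ∀ n, T 2 ≤ n → 2 ≤ K n ∧ T (K n) ≤ n ∧ n < T (K n + 1) := by
    intro n hn
    have h2 : 2 ≤ K n := Nat.le_findGreatest (by omega) hn
    refine ⟨h2, ?_, ?_⟩
    · exact Nat.findGreatest_spec (P := fun k => T k ≤ n) (m := 2) (by omega) hn
    · by_contra h
      push_neg at h
      exact Nat.findGreatest_is_greatest (P := fun k => T k ≤ n) (n := n + 2)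
        (k := K n + 1) (by simp only [hKdef]; omega)
        (by have := hKle n; simp only [hKdef] at this ⊢; omega)
        h
  -- K n → ∞
  have hKtop : Tendsto K atTop atTop := by
    rw [tendsto_atTop]
    intro m
    filter_upwards [eventually_ge_atTop (T (m + 1)), eventually_ge_atTop m] with n h1 h2
    have : m + 1 ≤ K n := Nat.le_findGreatest (by omega) h1
    omega
  -- limits of the bounding sequences
  have hone : Tendsto (fun k : ℕ => ((k : ℝ) + 1) / (k : ℝ)) atTop (nhds 1) := by
    have h0 : Tendsto (fun k : ℕ => 1 + 1 / (k : ℝ)) atTop (nhds (1 + 0)) :=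
      tendsto_const_nhds.add tendsto_one_div_atTop_nhds_zero_nat
    rw [add_zero] at h0
    refine h0.congr' ?_
    filter_upwards [eventually_ge_atTop 1] with k hk
    have : (k : ℝ) ≠ 0 := Nat.cast_ne_zero.mpr (by omega)
    field_simp
  have hDshift : Tendsto (fun k : ℕ => (D (k + 1) : ℝ) / ((k : ℝ) + 1)) atTop (nhds a) := by
    have := hDa.comp (tendsto_add_atTop_nat 1)
    refine this.congr fun k => ?_
    simp [Function.comp]
  have hTshift : Tendsto (fun k : ℕ => (T (k + 1) : ℝ) / ((k : ℝ) + 1)) atTop (nhds b) := by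
    have := hTb.comp (tendsto_add_atTop_nat 1)
    refine this.congr fun k => ?_
    simp [Function.comp]
  have hDa' : Tendsto (fun k : ℕ => (D (k + 1) : ℝ) / (k : ℝ)) atTop (nhds a) := by
    have h := hDshift.mul hone
    rw [mul_one] at h
    refine h.congr' ?_
    filter_upwards [eventually_ge_atTop 1] with k hk
    have hk0 : (k : ℝ) ≠ 0 := Nat.cast_ne_zero.mpr (by omega)
    have hk1 : (k : ℝ) + 1 ≠ 0 := by positivity
    field_simp
  have hTb' : Tendsto (fun k : ℕ => (T (k + 1) : ℝ) / (k : ℝ)) atTop (nhds b) := by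
    have h := hTshift.mul hone
    rw [mul_one] at h
    refine h.congr' ?_
    filter_upwards [eventually_ge_atTop 1] with k hk
    have hk0 : (k : ℝ) ≠ 0 := Nat.cast_ne_zero.mpr (by omega)
    have hk1 : (k : ℝ) + 1 ≠ 0 := by positivity
    field_simp
  have hb0 : b ≠ 0 := ne_of_gt hb
  have hdd : ∀ x y c : ℝ, c ≠ 0 → (x / c) / (y / c) = x / y := by
    intro x y c hc
    rcases eq_or_ne y 0 with h | h
    · simp [h]
    · field_simp
  have hL : Tendsto (fun k : ℕ => (D k : ℝ) / (T (k + 1) : ℝ)) atTop (nhds (a / b)) := by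
    have h := hDa.div hTb' hb0
    refine h.congr' ?_
    filter_upwards [eventually_ge_atTop 1] with k hk
    exact hdd _ _ _ (Nat.cast_ne_zero.mpr (by omega))
  have hU : Tendsto (fun k : ℕ => (D (k + 1) : ℝ) / (T k : ℝ)) atTop (nhds (a / b)) := by
    have h := hDa'.div hTb hb0
    refine h.congr' ?_
    filter_upwards [eventually_ge_atTop 1] with k hk
    exact hdd _ _ _ (Nat.cast_ne_zero.mpr (by omega))
  -- squeeze
  refine tendsto_of_tendsto_of_tendsto_of_le_of_le' (hL.comp hKtop) (hU.comp hKtop) ?_ ?_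
  · filter_upwards [eventually_ge_atTop (T 2), eventually_ge_atTop 1] with n hn hn1
    obtain ⟨hk2, hTk, hnlt⟩ := hKspec n hn
    set k := K n
    have hXl : D k ≤ X n := hXge k (by omega) n hTk
    have hDkpos : (0 : ℤ) ≤ D k := by have := hDk k (by omega); push_cast at this; omega
    show (D k : ℝ) / (T (k + 1) : ℝ) ≤ (X n : ℝ) / (n : ℝ)
    apply div_le_div₀
    · exact_mod_cast hDkpos.trans hXl
    · exact_mod_cast hXl
    · exact_mod_cast Nat.pos_of_ne_zero (by omega)
    · exact_mod_cast hnlt.le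
  · filter_upwards [eventually_ge_atTop (T 2), eventually_ge_atTop 1] with n hn hn1
    obtain ⟨hk2, hTk, hnlt⟩ := hKspec n hn
    set k := K n
    have hzpos : (0 : ℤ) < D (k + 1) := by
      have := hDk (k + 1) (by omega); push_cast at this; omega
    have hXu : X n ≤ D (k + 1) := by
      have h := hbelow (D (k + 1)) hzpos n ?_
      · exact h.le
      · intro j hj
        exact (hT (k + 1) (by omega)).2 j (by omega)
    have hTkpos : 0 < T k := by
      have h1 := hDk k (by omega)
      have h2 := hTD k (by omega)
      have : (1 : ℤ) ≤ (T k : ℤ) := by push_cast at h1 ⊢; omega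
      exact_mod_cast Int.lt_of_lt_of_le zero_lt_one this
    have hXnn : (0 : ℤ) ≤ X n := by
      have h1 := hXge k (by omega) n hTk
      have := hDk k (by omega)
      omega
    show (X n : ℝ) / (n : ℝ) ≤ (D (k + 1) : ℝ) / (T k : ℝ)
    apply div_le_div₀
    · exact_mod_cast hzpos.le
    · exact_mod_cast hXu
    · exact_mod_cast hTkpos
    · exact_mod_cast hTk
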